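/- Let w, n, s, d be positive integers with s ≥ log w and let ε ∈ (0,1). Suppose there exists a (2s, ε/(3n))-extractor Ext : {0,1}^{3s} × {0,1}^d → {0,1}^s. Let X be uniform on {0,1}^{3s} and Y₁,…,Yₙ be uniform on {0,1}^d, all mutually independent. Then for every f ∈ B(n,s,w), |E[f(Ext(X,Y₁), Ext(X,Y₂), …, Ext(X,Yₙ))] − E_{x uniform on ({0,1}^s)^n}[f(x)]| ≤ ε. -/

import Mathlib

open Real Finset
open scoped Classical

noncomputable section

/-- Expectation of a real-valued function under the uniform distribution on a finite type. -/
def uniformExp {α : Type*} [Fintype α] (f : α → ℝ) : ℝ :=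
  (∑ x, f x) / (Fintype.card α)

/-- A read-once branching program of length `n`, alphabet `{0,1}^s`, width `w`. -/
structure ROBP (n s w : ℕ) where
  δ : Fin n → Fin w → (Fin s → Bool) → Fin w
  start : Fin w
  accept : Finset (Fin w)

def ROBP.run {n s w : ℕ} (P : ROBP n s w) (x : Fin n → Fin s → Bool) : Fin w :=
  Fin.foldl n (fun v i => P.δ i v (x i)) P.start

def ROBP.fn {n s w : ℕ} (P : ROBP n s w) (x : Fin n → Fin s → Bool) : ℝ :=
  if P.run x ∈ P.accept then 1 else 0

/-- The class of functions computed by ROBPs of length `n`, alphabet `{0,1}^s`, width `w`. -/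
def Bclass (n s w : ℕ) : Set ((Fin n → Fin s → Bool) → ℝ) :=
  {f | ∃ P : ROBP n s w, f = P.fn}

/-- `(G, σ)` is a `W`-bounded `ε`-WPRG for the class `F`. -/
def IsWPRG {n s : ℕ} {ι : Type} [Fintype ι]
    (F : Set ((Fin n → Fin s → Bool) → ℝ))
    (G : ι → Fin n → Fin s → Bool) (σ : ι → ℝ) (W ε : ℝ) : Prop :=
  (∀ r, |σ r| ≤ W) ∧
  ∀ f ∈ F, |uniformExp f - uniformExp (fun r => σ r * f (G r))| ≤ ε

/-- `G` is an `ε`-PRG for the class `F`. -/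
def IsPRG {n s : ℕ} {ι : Type} [Fintype ι]
    (F : Set ((Fin n → Fin s → Bool) → ℝ))
    (G : ι → Fin n → Fin s → Bool) (ε : ℝ) : Prop :=
  ∀ f ∈ F, |uniformExp f - uniformExp (fun r => f (G r))| ≤ ε

/-- `(R, σ)` is a `(log₂ card ι, K, ε)`-weighted pseudorandom reduction from `F₀` to `F₁`. -/
def IsWPR {n₀ s₀ n₁ s₁ : ℕ} {ι : Type} [Fintype ι]
    (F₀ : Set ((Fin n₀ → Fin s₀ → Bool) → ℝ))
    (F₁ : Set ((Fin n₁ → Fin s₁ → Bool) → ℝ))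
    (R : (Fin n₁ → Fin s₁ → Bool) → ι → Fin n₀ → Fin s₀ → Bool)
    (σ : ι → ℝ) (K ε : ℝ) : Prop :=
  (∀ f ∈ F₀,
      |uniformExp f - uniformExp (fun i => σ i * uniformExp (fun x => f (R x i)))| ≤ ε) ∧
  (∀ i, |σ i| ≤ K) ∧
  (∀ f ∈ F₀, ∀ i, (fun x => f (R x i)) ∈ F₁)

def ROBP.Regular {n s w : ℕ} (P : ROBP n s w) : Prop :=
  ∀ (i : Fin n) (v : Fin w),
    (Finset.univ.filter (fun ux : Fin w × (Fin s → Bool) => P.δ i ux.1 ux.2 = v)).card = 2 ^ s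

def ROBP.Permutation {n s w : ℕ} (P : ROBP n s w) : Prop :=
  ∀ (i : Fin n) (x : Fin s → Bool), Function.Bijective (fun u => P.δ i u x)

/-- Regular ROBPs of length `n`, alphabet `{0,1}^s`, width `w`. -/
def Rclass (n s w : ℕ) : Set ((Fin n → Fin s → Bool) → ℝ) :=
  {f | ∃ P : ROBP n s w, P.Regular ∧ f = P.fn}

/-- Permutation ROBPs of length `n` over `{0,1}^s`, unbounded width, a single accept node. -/
def Pclass (n s : ℕ) : Set ((Fin n → Fin s → Bool) → ℝ) :=
  {f | ∃ (w : ℕ) (P : ROBP n s w), P.Permutation ∧ P.accept.card = 1 ∧ f = P.fn}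

/-- Permutation ROBPs of length `n`, alphabet `{0,1}^s`, width `w`, arbitrary accept set. -/
def PermClass (n s w : ℕ) : Set ((Fin n → Fin s → Bool) → ℝ) :=
  {f | ∃ P : ROBP n s w, P.Permutation ∧ f = P.fn}

/-- Run `P` starting from node `v` in layer `i` (only the transitions from layer `i` on are applied). -/
def ROBP.runFrom {n s w : ℕ} (P : ROBP n s w) (i : ℕ) (v : Fin w)
    (x : Fin n → Fin s → Bool) : Fin w :=
  Fin.foldl n (fun u j => if i ≤ (j : ℕ) then P.δ j u (x j) else u) v

/-- Acceptance probability of the subprogram of `P` started at node `v` of layer `i`. -/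
def ROBP.valueAt {n s w : ℕ} (P : ROBP n s w) (i : ℕ) (v : Fin w) : ℝ :=
  uniformExp (fun x : Fin n → Fin s → Bool => if P.runFrom i v x ∈ P.accept then (1 : ℝ) else 0)

/-- The weight `W(f)` of an ROBP: the sum over all edges of the differences of acceptance values. -/
def ROBP.weight {n s w : ℕ} (P : ROBP n s w) : ℝ :=
  ∑ i : Fin n, ∑ u : Fin w, ∑ x : Fin s → Bool,
    |P.valueAt ((i : ℕ) + 1) (P.δ i u x) - P.valueAt (i : ℕ) u|

/-- `(k,ε)`-extractor. -/
def IsExtractor (N d m : ℕ)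
    (Ext : (Fin N → Bool) → (Fin d → Bool) → (Fin m → Bool)) (k ε : ℝ) : Prop :=
  ∀ p : (Fin N → Bool) → ℝ,
    (∀ x, 0 ≤ p x) → (∑ x, p x) = 1 → (∀ x, p x ≤ (2 : ℝ) ^ (-k)) →
    (1 / 2) * ∑ z : Fin m → Bool,
      |(∑ x, ∑ y : Fin d → Bool, p x * (if Ext x y = z then (1 : ℝ) else 0)) / 2 ^ d
        - 1 / 2 ^ m| ≤ ε

/-- `(α,γ)`-averaging sampler. -/
def IsAvgSampler (r p q : ℕ)
    (Samp : (Fin r → Bool) → (Fin p → Bool) → (Fin q → Bool)) (α γ : ℝ) : Prop :=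
  ∀ f : (Fin q → Bool) → ℝ, (∀ z, -1 ≤ f z ∧ f z ≤ 1) →
    (∑ x : Fin r → Bool,
        if α ≤ |(∑ y : Fin p → Bool, f (Samp x y)) / 2 ^ p - uniformExp f| then (1 : ℝ) else 0)
      / 2 ^ r ≤ γ

/-- The matrix norm `‖M‖₁ = max_i Σ_j |M i j|`. -/
def matOneNorm {w : ℕ} (M : Matrix (Fin w) (Fin w) ℝ) : ℝ :=
  ⨆ i, ∑ j, |M i j|

end

/-!
Hybrid argument. Replace the outputs `Ext x (y i)` by independent uniform symbols one position at
a time. At position `k` the program sees the first `k` outputs only through the node `V` they lead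
to, a function of `x` (once the other seeds are fixed), and the later symbols are independent of
`x`; so each step costs at most how far `Ext` is from fooling a `[0, 1]`-valued test that also sees
the side information `V x ∈ Fin w`. Conditioning on `V` splits the source into `w` fibres. A fibre
`S` with `|S| ≥ 2 ^ (2 s)` is a flat source of min-entropy `2 s`, and a smaller one is the
difference of two such sets, so the fibre costs `ε' (|S| / 2 ^ (3 s) + 2 / 2 ^ s)`; in total a step
costs `ε' (1 + 2 w / 2 ^ s) ≤ 3 ε'` with `ε' = ε / (3 n)`, and the `n` steps cost `ε`.
-/

section UniformExp

variable {α β : Type*} [Fintype α] [Fintype β]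

lemma uniformExp_sub (f g : α → ℝ) :
    uniformExp (fun a => f a - g a) = uniformExp f - uniformExp g := by
  simp only [uniformExp, Finset.sum_sub_distrib, sub_div]

lemma uniformExp_const [Nonempty α] (c : ℝ) : uniformExp (fun _ : α => c) = c := by
  simp [uniformExp]

lemma abs_uniformExp_sub_le [Nonempty α] {f g : α → ℝ} {c : ℝ} (h : ∀ a, |f a - g a| ≤ c) :
    |uniformExp f - uniformExp g| ≤ c := by
  have hcard : (0 : ℝ) < Fintype.card α := by exact_mod_cast Fintype.card_pos
  rw [← uniformExp_sub, uniformExp, abs_div, abs_of_pos hcard, div_le_iff₀ hcard]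
  calc |∑ a, (f a - g a)| ≤ ∑ a, |f a - g a| := Finset.abs_sum_le_sum_abs _ _
    _ ≤ ∑ _a : α, c := Finset.sum_le_sum fun a _ => h a
    _ = c * Fintype.card α := by simp [mul_comm]

lemma uniformExp_prod (f : α × β → ℝ) :
    uniformExp f = uniformExp (fun a => uniformExp fun b => f (a, b)) := by
  simp only [uniformExp, Fintype.sum_prod_type, Fintype.card_prod, Nat.cast_mul,
    ← Finset.sum_div, div_div, mul_comm]

lemma uniformExp_comm (f : α → β → ℝ) :
    uniformExp (fun a => uniformExp fun b => f a b)
      = uniformExp (fun b => uniformExp fun a => f a b) := by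
  simp only [uniformExp, ← Finset.sum_div, div_div, mul_comm]
  rw [Finset.sum_comm]

lemma sum_sum_update {ι : Type*} [Fintype ι] [DecidableEq ι] (F : (ι → β) → ℝ) (k : ι) :
    ∑ u : ι → β, ∑ c : β, F (Function.update u k c) = Fintype.card β * ∑ u, F u := by
  have hinv : Function.Involutive fun p : (ι → β) × β => (Function.update p.1 k p.2, p.1 k) := by
    intro p
    simp
  rw [← Fintype.sum_prod_type', Fintype.sum_bijective _ hinv.bijective _ (fun p => F p.1)
    fun _ => rfl, Fintype.sum_prod_type]
  simp [Finset.mul_sum]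

lemma uniformExp_update {ι : Type*} [Fintype ι] [DecidableEq ι] [Nonempty β]
    (F : (ι → β) → ℝ) (k : ι) :
    uniformExp F = uniformExp fun u => uniformExp fun c => F (Function.update u k c) := by
  have hβ : (Fintype.card β : ℝ) ≠ 0 := by exact_mod_cast Fintype.card_ne_zero
  simp only [uniformExp, ← Finset.sum_div, sum_sum_update, div_div]
  rw [mul_div_mul_left _ _ hβ]

lemma uniformExp_update_update {ι β γ : Type*} [Fintype ι] [DecidableEq ι] [Fintype β]
    [Fintype γ] [Nonempty β] [Nonempty γ] (Φ : (ι → β) → (ι → γ) → ℝ) (k : ι) :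
    uniformExp (fun y => uniformExp fun z => Φ y z)
      = uniformExp fun y => uniformExp fun z => uniformExp fun ζ => uniformExp fun c =>
          Φ (Function.update y k c) (Function.update z k ζ) := by
  rw [uniformExp_update _ k]
  congr 1; funext y
  rw [uniformExp_comm, uniformExp_update _ k]

end UniformExp

def FoolsWithSideInfo {X Y A : Type*} [Fintype X] [Fintype Y] [Fintype A] (ι : Type*)
    (Ext : X → Y → A) (δ : ℝ) : Prop :=
  ∀ (V : X → ι) (g : ι → A → ℝ), (∀ v σ, 0 ≤ g v σ ∧ g v σ ≤ 1) →
    |uniformExp (fun x => uniformExp fun c => g (V x) (Ext x c))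
      - uniformExp (fun x => uniformExp fun σ => g (V x) σ)| ≤ δ

lemma abs_sum_mul_le_half_sum_abs {ι : Type*} [Fintype ι] {g t : ι → ℝ}
    (hg : ∀ i, 0 ≤ g i ∧ g i ≤ 1) (ht : ∑ i, t i = 0) :
    |∑ i, g i * t i| ≤ (∑ i, |t i|) / 2 := by
  have hcenter : ∑ i, g i * t i = ∑ i, (g i - 1 / 2) * t i := by
    simp only [sub_mul, Finset.sum_sub_distrib, ← Finset.mul_sum, ht, mul_zero, sub_zero]
  rw [hcenter, Finset.sum_div]
  refine (Finset.abs_sum_le_sum_abs _ _).trans (Finset.sum_le_sum fun i _ => ?_)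
  rw [abs_mul]
  have : |g i - 1 / 2| ≤ 1 / 2 := abs_le.mpr ⟨by linarith [hg i], by linarith [hg i]⟩
  nlinarith [abs_nonneg (t i)]

section Extractor

variable {N d m : ℕ} (Ext : (Fin N → Bool) → (Fin d → Bool) → (Fin m → Bool))

noncomputable def outputBias (x : Fin N → Bool) (z : Fin m → Bool) : ℝ :=
  (∑ c : Fin d → Bool, if Ext x c = z then (1 : ℝ) else 0) / 2 ^ d - 1 / 2 ^ m

lemma sum_outputBias (x : Fin N → Bool) : ∑ z, outputBias Ext x z = 0 := by
  simp only [outputBias, Finset.sum_sub_distrib, ← Finset.sum_div]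
  rw [Finset.sum_comm]
  simp

lemma uniformExp_comp_sub_uniformExp (x : Fin N → Bool) (h : (Fin m → Bool) → ℝ) :
    uniformExp (fun c => h (Ext x c)) - uniformExp h = ∑ z, h z * outputBias Ext x z := by
  simp only [outputBias, uniformExp, mul_sub, Finset.sum_sub_distrib, mul_div_assoc',
    Finset.mul_sum, mul_ite, mul_one, mul_zero, ← Finset.sum_div]
  rw [Finset.sum_comm]
  simp

end Extractor

namespace IsExtractor

variable {N d m : ℕ} {Ext : (Fin N → Bool) → (Fin d → Bool) → (Fin m → Bool)} {ε : ℝ}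

lemma sum_abs_sum_mul_outputBias_le {k : ℝ} (hExt : IsExtractor N d m Ext k ε) {p : (Fin N → Bool) → ℝ}
    (hp0 : ∀ x, 0 ≤ p x) (hp1 : ∑ x, p x = 1) (hpk : ∀ x, p x ≤ (2 : ℝ) ^ (-k)) :
    ∑ z, |∑ x, p x * outputBias Ext x z| ≤ 2 * ε := by
  have h := hExt p hp0 hp1 hpk
  have hbias : ∀ z, ∑ x, p x * outputBias Ext x z
      = (∑ x, ∑ c, p x * (if Ext x c = z then (1 : ℝ) else 0)) / 2 ^ d - 1 / 2 ^ m := by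
    intro z
    simp only [outputBias, mul_sub, Finset.sum_sub_distrib, mul_div_assoc', ← Finset.mul_sum,
      ← Finset.sum_div, ← Finset.sum_mul, hp1, one_mul]
  simp only [hbias]
  linarith

lemma sum_abs_sum_outputBias_le_of_le_card {k : ℝ} (hExt : IsExtractor N d m Ext k ε)
    {T : Finset (Fin N → Bool)} (hT : (2 : ℝ) ^ k ≤ T.card) :
    ∑ z, |∑ x ∈ T, outputBias Ext x z| ≤ 2 * ε * T.card := by
  have hTpos : (0 : ℝ) < T.card := lt_of_lt_of_le (by positivity) hT
  have h := hExt.sum_abs_sum_mul_outputBias_le (p := fun x => if x ∈ T then (T.card : ℝ)⁻¹ else 0)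
    (fun x => by split_ifs <;> positivity)
    (by simp [Finset.sum_ite_mem, hTpos.ne'])
    (fun x => by
      split_ifs
      · rw [Real.rpow_neg zero_le_two]
        exact inv_anti₀ (by positivity) hT
      · positivity)
  simp only [ite_mul, zero_mul, Finset.sum_ite_mem, Finset.univ_inter, ← Finset.mul_sum,
    abs_mul, abs_inv, abs_of_pos hTpos] at h
  rw [inv_mul_le_iff₀ hTpos] at h
  linarith

lemma sum_abs_sum_outputBias_le {k : ℕ} (hExt : IsExtractor N d m Ext k ε) (hk : k < N)
    (S : Finset (Fin N → Bool)) :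
    ∑ z, |∑ x ∈ S, outputBias Ext x z| ≤ 2 * ε * (S.card + 2 * 2 ^ k) := by
  have hpow : (2 : ℝ) ^ (k : ℝ) = 2 ^ k := Real.rpow_natCast 2 k
  by_cases hS : 2 ^ k ≤ S.card
  · have hS' : ((2 ^ k : ℕ) : ℝ) ≤ S.card := by exact_mod_cast hS
    push_cast at hS'
    have h := hExt.sum_abs_sum_outputBias_le_of_le_card (by rwa [hpow])
    have hε : 0 ≤ ε := by
      have : (0 : ℝ) < S.card := lt_of_lt_of_le (by positivity) hS'
      nlinarith [Finset.sum_nonneg fun z (_ : z ∈ Finset.univ) =>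
        abs_nonneg (∑ x ∈ S, outputBias Ext x z)]
    nlinarith [mul_nonneg hε (pow_nonneg zero_le_two k : (0 : ℝ) ≤ 2 ^ k)]
  · have hcompl : 2 ^ k ≤ Sᶜ.card := by
      have : 2 ^ k * 2 ≤ 2 ^ N := by rw [← pow_succ]; exact Nat.pow_le_pow_right two_pos hk
      rw [Finset.card_compl]
      simp only [Fintype.card_fun, Fintype.card_bool, Fintype.card_fin]
      omega
    obtain ⟨R, hRS, hR⟩ := Finset.exists_subset_card_eq hcompl
    have hdisj : Disjoint S R := Finset.disjoint_of_subset_right hRS disjoint_compl_right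
    have hSR := hExt.sum_abs_sum_outputBias_le_of_le_card (T := S ∪ R)
      (by rw [hpow, Finset.card_union_of_disjoint hdisj, hR]; push_cast; linarith)
    have hR' := hExt.sum_abs_sum_outputBias_le_of_le_card (T := R)
      (by rw [hpow, hR]; push_cast; rfl)
    rw [Finset.card_union_of_disjoint hdisj, hR] at hSR
    rw [hR] at hR'
    push_cast at hSR hR'
    have hsplit : ∀ z, ∑ x ∈ S, outputBias Ext x z
        = ∑ x ∈ S ∪ R, outputBias Ext x z - ∑ x ∈ R, outputBias Ext x z := fun z => by
      rw [Finset.sum_union hdisj, add_sub_cancel_right]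
    calc ∑ z, |∑ x ∈ S, outputBias Ext x z|
        ≤ ∑ z, (|∑ x ∈ S ∪ R, outputBias Ext x z| + |∑ x ∈ R, outputBias Ext x z|) :=
          Finset.sum_le_sum fun z _ => by rw [hsplit]; exact abs_sub _ _
      _ ≤ 2 * ε * (S.card + 2 * 2 ^ k) := by rw [Finset.sum_add_distrib]; linarith

lemma foolsWithSideInfo {k : ℕ} (hExt : IsExtractor N d m Ext k ε) (hk : k < N)
    (ι : Type*) [Fintype ι] :
    FoolsWithSideInfo ι Ext (ε * (1 + 2 * Fintype.card ι * 2 ^ k / 2 ^ N)) := by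
  intro V g hg
  set fiber : ι → Finset (Fin N → Bool) := fun v => {x | V x = v}
  have hfiber : ∀ v, ∑ x ∈ fiber v, ∑ z, g (V x) z * outputBias Ext x z
      = ∑ z, g v z * ∑ x ∈ fiber v, outputBias Ext x z := by
    intro v
    rw [Finset.sum_comm]
    refine Finset.sum_congr rfl fun z _ => ?_
    rw [Finset.mul_sum]
    refine Finset.sum_congr rfl fun x hx => ?_
    rw [(Finset.mem_filter.mp hx).2]
  have hbound : ∀ v, |∑ z, g v z * ∑ x ∈ fiber v, outputBias Ext x z|
      ≤ ε * ((fiber v).card + 2 * 2 ^ k) := by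
    intro v
    have hsum : ∑ z, ∑ x ∈ fiber v, outputBias Ext x z = 0 := by
      rw [Finset.sum_comm]
      simp [sum_outputBias]
    refine (abs_sum_mul_le_half_sum_abs (hg v) hsum).trans ?_
    linarith [hExt.sum_abs_sum_outputBias_le hk (fiber v)]
  have hcard : ∑ v, ((fiber v).card : ℝ) = 2 ^ N := by
    rw [← Nat.cast_sum, ← Finset.card_eq_sum_card_fiberwise fun x _ => Finset.mem_univ (V x)]
    simp
  rw [← uniformExp_sub]
  simp only [uniformExp_comp_sub_uniformExp]
  rw [uniformExp, ← Finset.sum_fiberwise Finset.univ V]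
  simp only [Fintype.card_fun, Fintype.card_bool, Fintype.card_fin, Nat.cast_pow,
    Nat.cast_ofNat, abs_div, abs_of_pos (by positivity : (0 : ℝ) < 2 ^ N)]
  change |∑ v, ∑ x ∈ fiber v, ∑ z, g (V x) z * outputBias Ext x z| / 2 ^ N ≤ _
  rw [Finset.sum_congr rfl fun v _ => hfiber v]
  calc |∑ v, ∑ z, g v z * ∑ x ∈ fiber v, outputBias Ext x z| / 2 ^ N
      ≤ (∑ v, ε * ((fiber v).card + 2 * 2 ^ k)) / 2 ^ N := by
        gcongr
        exact (Finset.abs_sum_le_sum_abs _ _).trans (Finset.sum_le_sum fun v _ => hbound v)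
    _ = ε * (1 + 2 * Fintype.card ι * 2 ^ k / 2 ^ N) := by
        rw [← Finset.mul_sum, Finset.sum_add_distrib, hcard]
        simp only [Finset.sum_const, Finset.card_univ, nsmul_eq_mul]
        field_simp

end IsExtractor

lemma Fin.foldl_ite_le_eq_foldl_ite_succ_le {α : Type*} {n k : ℕ} (hk : k < n)
    (F : Fin n → α → α) (v : α) :
    Fin.foldl n (fun u j => if k ≤ (j : ℕ) then F j u else u) v
      = Fin.foldl n (fun u j => if k + 1 ≤ (j : ℕ) then F j u else u) (F ⟨k, hk⟩ v) := by
  induction n generalizing k v with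
  | zero => exact absurd hk (Nat.not_lt_zero k)
  | succ m ih =>
    rw [Fin.foldl_succ, Fin.foldl_succ]
    cases k with
    | zero => simp
    | succ k =>
      simp only [Fin.val_succ, Fin.val_zero, Nat.add_le_add_iff_right]
      simp only [Nat.le_zero, Nat.add_one_ne_zero, if_false]
      exact ih (by omega) (fun j => F j.succ) v

namespace ROBP

variable {n s w : ℕ} (P : ROBP n s w)

def stateAt (x : Fin n → Fin s → Bool) : ℕ → Fin w
  | 0 => P.start
  | k + 1 => if h : k < n then P.δ ⟨k, h⟩ (stateAt x k) (x ⟨k, h⟩) else stateAt x k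

lemma stateAt_succ (x : Fin n → Fin s → Bool) (k : Fin n) :
    P.stateAt x (k + 1) = P.δ k (P.stateAt x k) (x k) := by
  simp [stateAt]

lemma runFrom_eq_runFrom_succ (k : Fin n) (v : Fin w) (x : Fin n → Fin s → Bool) :
    P.runFrom k v x = P.runFrom (k + 1) (P.δ k v (x k)) x :=
  Fin.foldl_ite_le_eq_foldl_ite_succ_le k.isLt (fun j u => P.δ j u (x j)) v

lemma run_eq_runFrom_stateAt (x : Fin n → Fin s → Bool) :
    ∀ k ≤ n, P.run x = P.runFrom k (P.stateAt x k) x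
  | 0, _ => by simp [run, runFrom, stateAt]
  | k + 1, hk => by
    rw [run_eq_runFrom_stateAt x k (by omega), P.runFrom_eq_runFrom_succ ⟨k, hk⟩,
      P.stateAt_succ x ⟨k, hk⟩]

lemma stateAt_congr {x x' : Fin n → Fin s → Bool} :
    ∀ k, (∀ j : Fin n, (j : ℕ) < k → x j = x' j) → P.stateAt x k = P.stateAt x' k
  | 0, _ => rfl
  | k + 1, h => by
    have ih := stateAt_congr k fun j hj => h j (by omega)
    by_cases hk : k < n
    · simp only [stateAt, dif_pos hk, ih, h ⟨k, hk⟩ (by simp)]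
    · simp only [stateAt, dif_neg hk, ih]

lemma runFrom_congr (k : ℕ) (v : Fin w) {x x' : Fin n → Fin s → Bool}
    (h : ∀ j : Fin n, k ≤ (j : ℕ) → x j = x' j) : P.runFrom k v x = P.runFrom k v x' := by
  unfold runFrom
  congr 1
  funext u j
  split_ifs with hj
  · rw [h j hj]
  · rfl

lemma fn_eq_of_agree (k : Fin n) {u a b : Fin n → Fin s → Bool}
    (ha : ∀ j : Fin n, j < k → u j = a j) (hb : ∀ j : Fin n, k < j → u j = b j) :
    P.fn u = if P.runFrom (k + 1) (P.δ k (P.stateAt a k) (u k)) b ∈ P.accept then 1 else 0 := by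
  rw [fn, P.run_eq_runFrom_stateAt u (k + 1) k.isLt, P.stateAt_succ,
    P.stateAt_congr k fun j hj => ha j hj, P.runFrom_congr _ _ fun j hj => hb j hj]

end ROBP

def hybrid {n : ℕ} {A : Type*} (k : ℕ) (a b : Fin n → A) : Fin n → A :=
  fun i => if (i : ℕ) < k then a i else b i

@[simp]
lemma hybrid_zero {n : ℕ} {A : Type*} (a b : Fin n → A) : hybrid 0 a b = b := by
  funext i
  simp [hybrid]

lemma hybrid_of_le {n k : ℕ} {A : Type*} (h : n ≤ k) (a b : Fin n → A) : hybrid k a b = a := by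
  funext i
  simp [hybrid, lt_of_lt_of_le i.isLt h]

namespace ROBP

variable {n s w : ℕ} (P : ROBP n s w) {X Y : Type*} [Fintype X] [Fintype Y]
  (Ext : X → Y → Fin s → Bool)

noncomputable def hybridExp (k : ℕ) : ℝ :=
  uniformExp fun y : Fin n → Y => uniformExp fun z : Fin n → Fin s → Bool =>
    uniformExp fun x : X => P.fn (hybrid k (fun i => Ext x (y i)) z)

variable [Nonempty Y]

lemma abs_hybridExp_succ_sub_le (k : Fin n) {δ : ℝ}
    (hExt : FoolsWithSideInfo (Fin w) Ext δ) :
    |P.hybridExp Ext (k + 1) - P.hybridExp Ext k| ≤ δ := by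
  have resample : ∀ j, P.hybridExp Ext j = uniformExp fun y => uniformExp fun z =>
      uniformExp fun ζ => uniformExp fun c => uniformExp fun x =>
        P.fn (hybrid j (fun i => Ext x (Function.update y k c i)) (Function.update z k ζ)) :=
    fun j => uniformExp_update_update _ k
  rw [resample, resample]
  refine abs_uniformExp_sub_le fun y => abs_uniformExp_sub_le fun z => ?_
  set V : X → Fin w := fun x => P.stateAt (fun i => Ext x (y i)) k
  set g : Fin w → (Fin s → Bool) → ℝ :=
    fun v σ => if P.runFrom (k + 1) (P.δ k v σ) z ∈ P.accept then 1 else 0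
  have hfn : ∀ (j : ℕ), (k : ℕ) ≤ j → j ≤ k + 1 → ∀ (x : X) (c : Y) (ζ : Fin s → Bool),
      P.fn (hybrid j (fun i => Ext x (Function.update y k c i)) (Function.update z k ζ))
        = g (V x) (hybrid j (fun i => Ext x (Function.update y k c i))
            (Function.update z k ζ) k) := by
    intro j hkj hjk x c ζ
    refine P.fn_eq_of_agree k (fun i hi => ?_) (fun i hi => ?_)
    · have hi' : (i : ℕ) < k := hi
      simp [hybrid, show (i : ℕ) < j by omega, Function.update_of_ne (ne_of_lt hi)]
    · have hi' : (k : ℕ) < i := hi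
      simp [hybrid, show ¬ (i : ℕ) < j by omega, Function.update_of_ne (ne_of_gt hi)]
  have h_succ : ∀ x c ζ,
      P.fn (hybrid (k + 1) (fun i => Ext x (Function.update y k c i)) (Function.update z k ζ))
        = g (V x) (Ext x c) := by
    intro x c ζ; rw [hfn _ (by omega) le_rfl]; simp [hybrid]
  have h_self : ∀ x c ζ,
      P.fn (hybrid k (fun i => Ext x (Function.update y k c i)) (Function.update z k ζ))
        = g (V x) ζ := by
    intro x c ζ; rw [hfn _ le_rfl (by omega)]; simp [hybrid]
  simp only [h_succ, h_self, uniformExp_const]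
  rw [uniformExp_comm, uniformExp_comm (fun σ x => g (V x) σ)]
  exact hExt V g fun v σ => by simp only [g]; split_ifs <;> norm_num

lemma abs_uniformExp_fn_ext_sub_le [Nonempty X] {δ : ℝ}
    (hExt : FoolsWithSideInfo (Fin w) Ext δ) :
    |uniformExp (fun xy : X × (Fin n → Y) => P.fn fun i => Ext xy.1 (xy.2 i))
      - uniformExp P.fn| ≤ n * δ := by
  have h_start : P.hybridExp Ext 0 = uniformExp P.fn := by
    simp only [hybridExp, hybrid_zero, uniformExp_const]
  have h_end : P.hybridExp Ext n
      = uniformExp (fun xy : X × (Fin n → Y) => P.fn fun i => Ext xy.1 (xy.2 i)) := by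
    simp only [hybridExp, hybrid_of_le le_rfl, uniformExp_const]
    rw [uniformExp_prod, uniformExp_comm]
  rw [← h_start, ← h_end, ← Finset.sum_range_sub]
  calc |∑ k ∈ Finset.range n, (P.hybridExp Ext (k + 1) - P.hybridExp Ext k)|
      ≤ ∑ k ∈ Finset.range n, |P.hybridExp Ext (k + 1) - P.hybridExp Ext k| :=
        Finset.abs_sum_le_sum_abs _ _
    _ ≤ ∑ _k ∈ Finset.range n, δ := Finset.sum_le_sum fun k hk =>
        P.abs_hybridExp_succ_sub_le Ext ⟨k, Finset.mem_range.mp hk⟩ hExt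
    _ = n * δ := by simp

end ROBP

theorem stmt4_general (w n s d : ℕ) (hw : 0 < w) (hn : 0 < n) (hs : 0 < s)
    (hsw : logb 2 (w : ℝ) ≤ (s : ℝ)) (ε : ℝ) (hε : 0 < ε)
    (Ext : (Fin (3 * s) → Bool) → (Fin d → Bool) → (Fin s → Bool))
    (hExt : IsExtractor (3 * s) d s Ext (2 * (s : ℝ)) (ε / (3 * n))) :
    ∀ f ∈ Bclass n s w,
      |uniformExp (fun xy : (Fin (3 * s) → Bool) × (Fin n → Fin d → Bool) =>
          f (fun i => Ext xy.1 (xy.2 i))) - uniformExp f| ≤ ε := by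
  rintro f ⟨P, rfl⟩
  have hw2 : (w : ℝ) ≤ 2 ^ s := by
    rw [← Real.rpow_natCast, ← Real.logb_le_iff_le_rpow one_lt_two (by exact_mod_cast hw)]
    exact hsw
  have hExt' : IsExtractor (3 * s) d s Ext (2 * s : ℕ) (ε / (3 * n)) := by
    push_cast
    exact hExt
  have hloss : 1 + 2 * (Fintype.card (Fin w) : ℝ) * 2 ^ (2 * s) / 2 ^ (3 * s) ≤ 3 := by
    have h2s : (0 : ℝ) < 2 ^ (2 * s) := by positivity
    have h : 2 * (w : ℝ) * 2 ^ (2 * s) / 2 ^ (3 * s) ≤ 2 := by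
      rw [show 3 * s = 2 * s + s by ring, pow_add, div_le_iff₀ (by positivity)]
      nlinarith
    rw [Fintype.card_fin]
    linarith
  have hfool : FoolsWithSideInfo (Fin w) Ext (ε / (3 * n) * 3) := fun V g hg =>
    (hExt'.foolsWithSideInfo (by omega) (Fin w) V g hg).trans
      (mul_le_mul_of_nonneg_left hloss (by positivity))
  calc _ ≤ n * (ε / (3 * n) * 3) := P.abs_uniformExp_fn_ext_sub_le Ext hfool
    _ = ε := by field_simp

theorem stmt4 (w n s d : ℕ) (hw : 0 < w) (hn : 0 < n) (hs : 0 < s) (hd : 0 < d)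
    (hsw : logb 2 (w : ℝ) ≤ (s : ℝ)) (ε : ℝ) (hε : 0 < ε) (hε1 : ε < 1)
    (Ext : (Fin (3 * s) → Bool) → (Fin d → Bool) → (Fin s → Bool))
    (hExt : IsExtractor (3 * s) d s Ext (2 * (s : ℝ)) (ε / (3 * n))) :
    ∀ f ∈ Bclass n s w,
      |uniformExp (fun xy : (Fin (3 * s) → Bool) × (Fin n → Fin d → Bool) =>
          f (fun i => Ext xy.1 (xy.2 i))) - uniformExp f| ≤ ε :=
  stmt4_general w n s d hw hn hs hsw ε hε Ext hExt
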